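/- arXiv:1002.1412 — 2 statements merged into one kernel-verified Lean document; each statement's English description precedes it below -/
import Mathlib

section
/- The distributional estimate for the bilinear strong maximal function in ℝ² is sharp: taking f = χ_{[0,1]²} and g_N = N·χ_{[0,1]²}, one has |{x ∈ ℝ² : 𝓜_𝓡(f,g_N)(x) > 1/100}| ≥ c·√N·log N for large N, while ∫Φ₂(10|f|)dx · ∫Φ₂(10|g_N|)dx ≲ N·(log N)², so that the estimate with Φ₂^{(1)} = Φ₂ in place of Φ₂^{(2)} fails. -/
open MeasureTheory
open scoped ENNReal

/-- An open axis-parallel rectangle in `ℝⁿ`. -/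
def IsRect {n : ℕ} (R : Set (Fin n → ℝ)) : Prop :=
  ∃ a b : Fin n → ℝ, (∀ i, a i < b i) ∧
    R = Set.univ.pi fun i => Set.Ioo (a i) (b i)

/-- The average of `|f|` over a set `R` (as an extended nonnegative real). -/
noncomputable def avgAbs {n : ℕ} (R : Set (Fin n → ℝ)) (f : (Fin n → ℝ) → ℝ) : ℝ≥0∞ :=
  (∫⁻ y in R, ENNReal.ofReal |f y|) / volume R

/-- The (linear) strong maximal function over axis-parallel rectangles. -/
noncomputable def strongMaximal {n : ℕ} (f : (Fin n → ℝ) → ℝ) (x : Fin n → ℝ) : ℝ≥0∞ :=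
  ⨆ (R : Set (Fin n → ℝ)) (_ : IsRect R) (_ : x ∈ R), avgAbs R f

/-- The multilinear strong maximal function over axis-parallel rectangles. -/
noncomputable def multiStrongMaximal {n m : ℕ} (f : Fin m → (Fin n → ℝ) → ℝ)
    (x : Fin n → ℝ) : ℝ≥0∞ :=
  ⨆ (R : Set (Fin n → ℝ)) (_ : IsRect R) (_ : x ∈ R), ∏ i, avgAbs R (f i)

/-- `Φ₂(t) = t log(e+t)`. -/
noncomputable def Phi2 (t : ℝ) : ℝ := t * Real.log (Real.exp 1 + t)

/-- The unit square in `ℝ²`. -/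
def unitSquare : Set (Fin 2 → ℝ) := Set.univ.pi fun _ => Set.Icc (0:ℝ) 1


/-! If `1 < x₀`, `1 < x₁` and `x₀x₁ < 10√N`, the rectangle `(0, t x₀) × (0, t x₁)`, with `t > 1`
chosen so that its area `δ` lies strictly between `x₀x₁` and `10√N`, contains `x` and, up to a null
set, the unit square; the product of the averages of `χ` and `Nχ` over it is `N / δ² > 1/100`. So
the level set contains `{1 < x₀, 1 < x₁, x₀x₁ < K}` with `K = 10√N`, of area
`K log K - K + 1 ≥ 5√N log N`. On the other side `Φ₂(10) Φ₂(10N) ≤ 2400 N log N`, and the `Φ₂`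
estimate at `α = 1/10` would give `√N log N ≲ √(N log N)`, which fails once `log N` is large. -/

open Set

lemma le_multiStrongMaximal {n m : ℕ} (f : Fin m → (Fin n → ℝ) → ℝ) {R : Set (Fin n → ℝ)}
    (hR : IsRect R) {x : Fin n → ℝ} (hx : x ∈ R) :
    ∏ i, avgAbs R (f i) ≤ multiStrongMaximal f x :=
  le_iSup₂_of_le R hR (le_iSup_of_le hx le_rfl)

lemma avgAbs_indicator_const {n : ℕ} {Q : Set (Fin n → ℝ)} (hQ : MeasurableSet Q)
    (R : Set (Fin n → ℝ)) (c : ℝ) :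
    avgAbs R (Q.indicator fun _ => c) = ENNReal.ofReal |c| * volume (Q ∩ R) / volume R := by
  have : (fun y => ENNReal.ofReal |Q.indicator (fun _ => c) y|) =
      Q.indicator fun _ => ENNReal.ofReal |c| :=
    (Set.indicator_comp_of_zero (g := fun t => ENNReal.ofReal |t|) (by simp)).symm
  rw [avgAbs, this, lintegral_indicator_const hQ, Measure.restrict_apply hQ]

lemma measurableSet_unitSquare : MeasurableSet unitSquare :=
  MeasurableSet.univ_pi fun _ => measurableSet_Icc

lemma volume_unitSquare : volume unitSquare = 1 := by
  rw [unitSquare, volume_pi_pi]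
  simp

lemma avgAbs_indicator_unitSquare {b : Fin 2 → ℝ} (hb : ∀ i, 1 < b i) (c : ℝ) :
    avgAbs (univ.pi fun i => Ioo 0 (b i)) (unitSquare.indicator fun _ => c) =
      ENNReal.ofReal (|c| / (b 0 * b 1)) := by
  have hb0 : ∀ i, 0 < b i := fun i => one_pos.trans (hb i)
  have hinter : unitSquare ∩ univ.pi (fun i => Ioo 0 (b i)) = univ.pi fun _ => Ioc 0 1 := by
    rw [unitSquare, ← pi_inter_distrib]
    refine pi_congr rfl fun i _ => ?_
    ext t
    simp only [mem_inter_iff, mem_Icc, mem_Ioo, mem_Ioc]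
    constructor
    · rintro ⟨⟨-, h1⟩, h0, -⟩; exact ⟨h0, h1⟩
    · rintro ⟨h0, h1⟩; exact ⟨⟨h0.le, h1⟩, h0, h1.trans_lt (hb i)⟩
  rw [avgAbs_indicator_const measurableSet_unitSquare, hinter, volume_pi_pi, volume_pi_pi]
  simp only [Real.volume_Ioc, Real.volume_Ioo, sub_zero, Fin.prod_univ_two]
  rw [ENNReal.ofReal_one, one_mul, mul_one, ← ENNReal.ofReal_mul (hb0 0).le,
    ENNReal.ofReal_div_of_pos (mul_pos (hb0 0) (hb0 1))]

lemma ofReal_le_multiStrongMaximal_indicator_unitSquare {x : Fin 2 → ℝ} (hx : ∀ i, 1 < x i)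
    {δ : ℝ} (hδ : x 0 * x 1 < δ) (c d : ℝ) :
    ENNReal.ofReal (|c| * |d| / δ ^ 2) ≤
      multiStrongMaximal ![unitSquare.indicator fun _ => c, unitSquare.indicator fun _ => d] x := by
  have hx0 : ∀ i, 0 < x i := fun i => one_pos.trans (hx i)
  have hP : 0 < x 0 * x 1 := mul_pos (hx0 0) (hx0 1)
  set t := √(δ / (x 0 * x 1))
  have ht : 1 < t := by
    rw [Real.lt_sqrt zero_le_one, one_pow, one_lt_div hP]; exact hδ
  have hxb : ∀ i, x i < t * x i := fun i => lt_mul_of_one_lt_left (hx0 i) ht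
  have hbδ : (t * x 0) * (t * x 1) = δ := by
    rw [mul_mul_mul_comm, ← sq, Real.sq_sqrt (div_pos (hP.trans hδ) hP).le,
      div_mul_cancel₀ _ hP.ne']
  have hrect : IsRect (univ.pi fun i => Ioo 0 (t * x i)) :=
    ⟨0, fun i => t * x i, fun i => (hx0 i).trans (hxb i), rfl⟩
  have hmem : x ∈ univ.pi fun i => Ioo 0 (t * x i) := fun i _ => ⟨hx0 i, hxb i⟩
  refine le_of_eq_of_le ?_ (le_multiStrongMaximal _ hrect hmem)
  have hb : ∀ i, 1 < t * x i := fun i => (hx i).trans (hxb i)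
  rw [Fin.prod_univ_two, Matrix.cons_val_zero, Matrix.cons_val_one, Matrix.cons_val_zero,
    avgAbs_indicator_unitSquare hb, avgAbs_indicator_unitSquare hb, hbδ,
    ← ENNReal.ofReal_mul (div_nonneg (abs_nonneg c) (hP.trans hδ).le), div_mul_div_comm, sq]

lemma hyperbolicRegion_subset_levelSet (N : ℕ) :
    {x : Fin 2 → ℝ | 1 < x 0 ∧ 1 < x 1 ∧ x 0 * x 1 < 10 * √N} ⊆
      {x | ENNReal.ofReal (1 / 100) < multiStrongMaximal
        ![unitSquare.indicator fun _ => (1:ℝ), unitSquare.indicator fun _ => (N:ℝ)] x} := by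
  rintro x ⟨h0, h1, hlt⟩
  have hx : ∀ i, 1 < x i := Fin.forall_fin_two.2 ⟨h0, h1⟩
  obtain ⟨δ, hPδ, hδK⟩ := exists_between hlt
  have hδ : 0 < δ := (mul_pos (one_pos.trans h0) (one_pos.trans h1)).trans hPδ
  have hN : (0:ℝ) < N := Real.sqrt_pos.1 (by linarith)
  have hδsq : δ ^ 2 < 100 * N := by
    calc δ ^ 2 < (10 * √N) ^ 2 := pow_lt_pow_left₀ hδK hδ.le two_ne_zero
      _ = 100 * N := by rw [mul_pow, Real.sq_sqrt hN.le]; norm_num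
  calc ENNReal.ofReal (1 / 100) < ENNReal.ofReal (|1| * |(N:ℝ)| / δ ^ 2) := by
        rw [ENNReal.ofReal_lt_ofReal_iff (by positivity), abs_one, one_mul, Nat.abs_cast,
          lt_div_iff₀ (by positivity)]
        linarith
    _ ≤ _ := ofReal_le_multiStrongMaximal_indicator_unitSquare hx hPδ 1 N

lemma hyperbolicRegion_eq_preimage_regionBetween {K : ℝ} :
    {x : Fin 2 → ℝ | 1 < x 0 ∧ 1 < x 1 ∧ x 0 * x 1 < K} =
      MeasurableEquiv.piFinTwo (fun _ => ℝ) ⁻¹'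
        regionBetween (fun _ => 1) (fun a => K / a) (Ioo 1 K) := by
  ext x
  simp only [mem_ofPred_eq, mem_preimage, regionBetween, MeasurableEquiv.piFinTwo_apply, mem_Ioo]
  constructor
  · rintro ⟨h0, h1, hlt⟩
    exact ⟨⟨h0, by nlinarith⟩, h1, by rwa [lt_div_iff₀ (one_pos.trans h0), mul_comm]⟩
  · rintro ⟨⟨h0, -⟩, h1, hlt⟩
    rw [lt_div_iff₀ (one_pos.trans h0), mul_comm] at hlt
    exact ⟨h0, h1, hlt⟩

lemma integral_Ioo_div_sub_one {K : ℝ} (hK : 1 ≤ K) :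
    ∫ a in Ioo 1 K, (K / a - 1) = K * Real.log K - K + 1 := by
  have hinv : IntervalIntegrable (fun a : ℝ => a⁻¹) volume 1 K :=
    intervalIntegral.intervalIntegrable_inv
      (fun a ha => (one_pos.trans_le (by rw [uIcc_of_le hK] at ha; exact ha.1)).ne')
      continuousOn_id
  simp_rw [div_eq_mul_inv K]
  rw [← integral_Ioc_eq_integral_Ioo, ← intervalIntegral.integral_of_le hK,
    intervalIntegral.integral_sub (hinv.const_mul K) intervalIntegrable_const,
    intervalIntegral.integral_const_mul, integral_inv_of_pos one_pos (one_pos.trans_le hK),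
    intervalIntegral.integral_const, div_one, smul_eq_mul, mul_one]
  ring

lemma volume_hyperbolicRegion {K : ℝ} (hK : 1 ≤ K) :
    volume {x : Fin 2 → ℝ | 1 < x 0 ∧ 1 < x 1 ∧ x 0 * x 1 < K} =
      ENNReal.ofReal (K * Real.log K - K + 1) := by
  have hcont : ContinuousOn (fun a => K / a) (Icc 1 K) :=
    continuousOn_const.div continuousOn_id fun a ha => (one_pos.trans_le ha.1).ne'
  have hmeas : MeasurableSet (regionBetween (fun _ => 1) (fun a => K / a) (Ioo 1 K)) :=
    measurableSet_regionBetween measurable_const (measurable_const.div measurable_id)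
      measurableSet_Ioo
  rw [hyperbolicRegion_eq_preimage_regionBetween,
    (volume_preserving_piFinTwo fun _ => ℝ).measure_preimage hmeas.nullMeasurableSet,
    Measure.volume_eq_prod, volume_regionBetween_eq_integral (integrableOn_const (by simp))
      (hcont.integrableOn_Icc.mono_set Ioo_subset_Icc_self) measurableSet_Ioo,
    ← integral_Ioo_div_sub_one hK]
  · rfl
  · intro a ha
    rw [le_div_iff₀ (one_pos.trans ha.1), one_mul]
    exact ha.2.le

lemma one_le_log_ten : 1 ≤ Real.log 10 := by
  rw [Real.le_log_iff_exp_le (by norm_num)]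
  exact (Real.exp_one_lt_d9.trans (by norm_num)).le

lemma five_mul_sqrt_mul_log_le {N : ℝ} (hN : 1 ≤ N) :
    5 * √N * Real.log N ≤ 10 * √N * Real.log (10 * √N) - 10 * √N + 1 := by
  have hs : 0 ≤ √N := Real.sqrt_nonneg N
  rw [Real.log_mul (by norm_num) (Real.sqrt_pos.2 (by linarith)).ne',
    Real.log_sqrt (by linarith)]
  nlinarith [mul_le_mul_of_nonneg_left one_le_log_ten hs]

lemma ofReal_sqrt_mul_log_le_volume_levelSet {N : ℕ} (hN : 1 ≤ N) :
    ENNReal.ofReal (5 * √N * Real.log N) ≤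
      volume {x | ENNReal.ofReal (1 / 100) < multiStrongMaximal
        ![unitSquare.indicator fun _ => (1:ℝ), unitSquare.indicator fun _ => (N:ℝ)] x} := by
  have hN' : (1:ℝ) ≤ N := by exact_mod_cast hN
  have hK : 1 ≤ 10 * √(N:ℝ) := by nlinarith [Real.one_le_sqrt.2 hN']
  calc ENNReal.ofReal (5 * √N * Real.log N)
      ≤ ENNReal.ofReal (10 * √N * Real.log (10 * √N) - 10 * √N + 1) :=
        ENNReal.ofReal_le_ofReal (five_mul_sqrt_mul_log_le hN')
    _ = volume {x : Fin 2 → ℝ | 1 < x 0 ∧ 1 < x 1 ∧ x 0 * x 1 < 10 * √N} :=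
        (volume_hyperbolicRegion hK).symm
    _ ≤ _ := measure_mono (hyperbolicRegion_subset_levelSet N)

lemma Phi2_nonneg {t : ℝ} (ht : 0 ≤ t) : 0 ≤ Phi2 t :=
  mul_nonneg ht (Real.log_nonneg (by linarith [Real.add_one_le_exp 1]))

lemma Phi2_ten_le : Phi2 10 ≤ 120 := by
  have := Real.log_le_sub_one_of_pos (show 0 < Real.exp 1 + 10 by positivity)
  have := Real.exp_one_lt_d9
  rw [Phi2]
  linarith

lemma Phi2_ten_mul_le {t : ℝ} (ht : 11 ≤ t) : Phi2 (10 * t) ≤ 20 * t * Real.log t := by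
  have hlog : Real.log (Real.exp 1 + 10 * t) ≤ 2 * Real.log t := by
    have ht0 : t ≠ 0 := by positivity
    calc Real.log (Real.exp 1 + 10 * t) ≤ Real.log (t * t) :=
          Real.log_le_log (by positivity) (by nlinarith [Real.exp_one_lt_d9])
      _ = 2 * Real.log t := by rw [Real.log_mul ht0 ht0]; ring
  rw [Phi2]
  nlinarith

lemma lintegral_Phi2_mul_abs_indicator {n : ℕ} {Q : Set (Fin n → ℝ)} (hQ : MeasurableSet Q)
    (a c : ℝ) :
    ∫⁻ x, ENNReal.ofReal (Phi2 (a * |Q.indicator (fun _ => c) x|)) =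
      ENNReal.ofReal (Phi2 (a * |c|)) * volume Q := by
  have : (fun x => ENNReal.ofReal (Phi2 (a * |Q.indicator (fun _ => c) x|))) =
      Q.indicator fun _ => ENNReal.ofReal (Phi2 (a * |c|)) :=
    (Set.indicator_comp_of_zero (g := fun t => ENNReal.ofReal (Phi2 (a * |t|)))
      (by simp [Phi2])).symm
  rw [this, lintegral_indicator_const hQ]

lemma lintegral_Phi2_mul_lintegral_Phi2_le {N : ℕ} (hN : 11 ≤ N) :
    (∫⁻ x, ENNReal.ofReal (Phi2 (10 * |unitSquare.indicator (fun _ => (1:ℝ)) x|))) *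
      (∫⁻ x, ENNReal.ofReal (Phi2 (10 * |unitSquare.indicator (fun _ => (N:ℝ)) x|))) ≤
      ENNReal.ofReal (2400 * N * Real.log N) := by
  have hN' : (11:ℝ) ≤ N := by exact_mod_cast hN
  rw [lintegral_Phi2_mul_abs_indicator measurableSet_unitSquare,
    lintegral_Phi2_mul_abs_indicator measurableSet_unitSquare, volume_unitSquare, abs_one,
    Nat.abs_cast, mul_one, mul_one, mul_one, ← ENNReal.ofReal_mul (Phi2_nonneg (by norm_num))]
  refine ENNReal.ofReal_le_ofReal ?_
  calc Phi2 10 * Phi2 (10 * N) ≤ 120 * (20 * N * Real.log N) :=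
        mul_le_mul Phi2_ten_le (Phi2_ten_mul_le hN') (Phi2_nonneg (by positivity)) (by norm_num)
    _ = 2400 * N * Real.log N := by ring

lemma log_le_of_mul_sqrt_mul_log_le {x C : ℝ} (hx : 1 < x)
    (h : 5 * √x * Real.log x ≤ C * √(2400 * x * Real.log x)) : Real.log x ≤ 96 * C ^ 2 := by
  have hL : 0 < Real.log x := Real.log_pos hx
  have hsq := pow_le_pow_left₀ (by positivity) h 2
  rw [mul_pow, mul_pow, mul_pow, Real.sq_sqrt (by linarith), Real.sq_sqrt (by positivity)] at hsq
  nlinarith [mul_pos (by linarith : (0:ℝ) < x) hL]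

/-- Sharpness of the bilinear endpoint estimate in `ℝ²`: for `f = χ_{[0,1]²}` and
`g_N = N χ_{[0,1]²}`, the level set `{𝓜_𝓡(f,g_N) > 1/100}` has measure at least
`c √N log N`, while `∫Φ₂(10|f|) ∫Φ₂(10|g_N|) ≲ N (log N)²`; consequently the
distributional estimate with `Φ₂` in place of `Φ₂^{(2)}` fails. -/
theorem bilinear_endpoint_sharp :
    (∃ c : ℝ, 0 < c ∧ ∃ N₀ : ℕ, ∀ N : ℕ, N₀ ≤ N →
      ENNReal.ofReal (c * Real.sqrt N * Real.log N) ≤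
        volume {x | ENNReal.ofReal (1 / 100) <
          multiStrongMaximal
            ![Set.indicator unitSquare fun _ => (1:ℝ),
              Set.indicator unitSquare fun _ => (N:ℝ)] x}) ∧
    (∃ C : ℝ, 0 < C ∧ ∃ N₀ : ℕ, ∀ N : ℕ, N₀ ≤ N →
      (∫⁻ x, ENNReal.ofReal (Phi2 (10 * |Set.indicator unitSquare (fun _ => (1:ℝ)) x|))) *
        (∫⁻ x, ENNReal.ofReal (Phi2 (10 * |Set.indicator unitSquare (fun _ => (N:ℝ)) x|))) ≤
        ENNReal.ofReal (C * N * (Real.log N) ^ 2)) ∧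
    ¬ ∃ C : ℝ, 0 < C ∧ ∀ (f g : (Fin 2 → ℝ) → ℝ), Measurable f → Measurable g →
        ∀ α : ℝ, 0 < α →
        volume {x | ENNReal.ofReal (α ^ 2) < multiStrongMaximal ![f, g] x} ≤
          ENNReal.ofReal C *
            ((∫⁻ x, ENNReal.ofReal (Phi2 (|f x| / α))) *
              (∫⁻ x, ENNReal.ofReal (Phi2 (|g x| / α)))) ^ (1 / (2:ℝ)) := by
  refine ⟨⟨5, by norm_num, 1, fun N hN => ofReal_sqrt_mul_log_le_volume_levelSet hN⟩,
    ⟨2400, by norm_num, 11, fun N hN => ?_⟩, ?_⟩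
  · have hlog : 1 ≤ Real.log N :=
      one_le_log_ten.trans (Real.log_le_log (by norm_num) (by exact_mod_cast (by omega : 10 ≤ N)))
    refine (lintegral_Phi2_mul_lintegral_Phi2_le hN).trans (ENNReal.ofReal_le_ofReal ?_)
    rw [sq, ← mul_assoc]
    exact le_mul_of_one_le_right (by positivity) hlog
  · rintro ⟨C, hC, hest⟩
    obtain ⟨N, hlogN, hN⟩ :=
      (((Real.tendsto_log_atTop.comp tendsto_natCast_atTop_atTop).eventually_gt_atTop
        (96 * C ^ 2)).and (Filter.eventually_ge_atTop 11)).exists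
    have hχ (c : ℝ) : Measurable (unitSquare.indicator fun _ => c) :=
      measurable_const.indicator measurableSet_unitSquare
    have hestN := hest _ _ (hχ 1) (hχ N) (1 / 10) (by norm_num)
    simp only [show ∀ a : ℝ, a / (1 / 10) = 10 * a from fun a => by ring,
      show ((1:ℝ) / 10) ^ 2 = 1 / 100 by norm_num] at hestN
    have h := (ofReal_sqrt_mul_log_le_volume_levelSet (by omega : 1 ≤ N)).trans
      (hestN.trans (mul_le_mul_right
        (ENNReal.rpow_le_rpow (lintegral_Phi2_mul_lintegral_Phi2_le hN) (by norm_num)) _))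
    rw [ENNReal.ofReal_rpow_of_nonneg (by positivity) (by norm_num), ← ENNReal.ofReal_mul hC.le,
      ENNReal.ofReal_le_ofReal_iff (by positivity), ← Real.sqrt_eq_rpow] at h
    exact (log_le_of_mul_sqrt_mul_log_le (by exact_mod_cast (by omega : 1 < N)) h).not_gt hlogN
end

section
/- In ℝ², the strong maximal function of the unit square satisfies: there exist constants c,C > 0 such that for all 0 < t < 1/2, c·(1/t)·log(1/t) ≤ |{x ∈ ℝ² : M_𝓡(χ_{[0,1]²})(x) > t}| ≤ C·(1/t)·log(1/t). -/
open MeasureTheory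
open scoped ENNReal

/-!
Let `hullLength s = max s 1 - min s 0` be the length of the smallest interval containing
`[0, 1]` and `s`. An interval containing `s` meets `[0, 1]` in at most a `1 / hullLength s`
fraction of its length, and the hull interval enlarged by `δ` on both sides almost attains this,
so `M_𝓡(χ_{[0,1]ⁿ})(x) = ∏ᵢ 1 / hullLength xᵢ` exactly. In the plane, with `s = 1 / t > 1`,
the level set `{hullLength x₁ · hullLength x₂ < s}` is the region between `1 - s / hullLength`
and `s / hullLength` over `(1 - s, s)`, whose area is `∫ (2s / hullLength - 1) = 4 s log s + 1`.
-/

open Set Filter Topology Real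

noncomputable def hullLength (s : ℝ) : ℝ := max s 1 - min s 0

lemma one_le_hullLength (s : ℝ) : 1 ≤ hullLength s := by
  have := le_max_right s 1
  have := min_le_right s 0
  unfold hullLength
  linarith

lemma hullLength_pos (s : ℝ) : 0 < hullLength s := one_pos.trans_le (one_le_hullLength s)

@[fun_prop]
lemma continuous_hullLength : Continuous hullLength := by
  unfold hullLength
  fun_prop

lemma hullLength_of_nonpos {s : ℝ} (hs : s ≤ 0) : hullLength s = 1 - s := by
  simp [hullLength, hs, hs.trans zero_le_one]

lemma hullLength_of_mem_Icc {s : ℝ} (hs : s ∈ Icc (0 : ℝ) 1) : hullLength s = 1 := by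
  simp [hullLength, hs.1, hs.2]

lemma hullLength_of_one_le {s : ℝ} (hs : 1 ≤ s) : hullLength s = s := by
  simp [hullLength, hs, zero_le_one.trans hs]

lemma hullLength_lt_iff {s r : ℝ} : hullLength s < r ↔ 1 < r ∧ s ∈ Ioo (1 - r) r := by
  rw [mem_Ioo]
  rcases le_total s 0 with h | h
  · rw [hullLength_of_nonpos h]
    constructor <;> intro <;> (try refine ⟨?_, ?_, ?_⟩) <;> linarith
  rcases le_total s 1 with h' | h'
  · rw [hullLength_of_mem_Icc ⟨h, h'⟩]
    constructor <;> intro <;> (try refine ⟨?_, ?_, ?_⟩) <;> linarith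
  · rw [hullLength_of_one_le h']
    constructor <;> intro <;> (try refine ⟨?_, ?_, ?_⟩) <;> linarith

lemma volume_Icc_inter_Ioo_le {a b s : ℝ} (hs : s ∈ Ioo a b) :
    volume (Icc (0 : ℝ) 1 ∩ Ioo a b) ≤ ENNReal.ofReal (hullLength s)⁻¹ * volume (Ioo a b) := by
  have hsub : Icc (0 : ℝ) 1 ∩ Ioo a b ⊆ Icc (max 0 a) (min 1 b) :=
    fun y ⟨⟨h0, h1⟩, ha, hb⟩ => ⟨max_le h0 ha.le, le_min h1 hb.le⟩
  refine (measure_mono hsub).trans ?_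
  rw [Real.volume_Icc, Real.volume_Ioo, ← ENNReal.ofReal_mul (inv_nonneg.2 (hullLength_pos s).le),
    inv_mul_eq_div]
  refine ENNReal.ofReal_le_ofReal ((le_div_iff₀ (hullLength_pos s)).2 ?_)
  have hle : min 1 b - max 0 a ≤ 1 := by
    have := le_max_left 0 a; have := min_le_left 1 b; linarith
  -- `(a, b)` contains `[0, 1] ∩ (a, b)` and `s`, at distance `hullLength s - 1` from `[0, 1]`
  have hspan : min 1 b - max 0 a + (hullLength s - 1) ≤ b - a := by
    have := le_max_left 0 a; have := le_max_right 0 a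
    have := min_le_left 1 b; have := min_le_right 1 b
    rcases le_total s 0 with h | h
    · rw [hullLength_of_nonpos h]; linarith [hs.1]
    rcases le_total s 1 with h' | h'
    · rw [hullLength_of_mem_Icc ⟨h, h'⟩]; linarith
    · rw [hullLength_of_one_le h']; linarith [hs.2]
  nlinarith [mul_nonneg (sub_nonneg.2 hle) (sub_nonneg.2 (one_le_hullLength s))]

def unitCube (n : ℕ) : Set (Fin n → ℝ) := univ.pi fun _ => Icc 0 1

section UnitCube

variable {n : ℕ}

lemma avgAbs_indicator_one {E : Set (Fin n → ℝ)} (hE : MeasurableSet E) (R : Set (Fin n → ℝ)) :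
    avgAbs R (E.indicator fun _ => 1) = volume (E ∩ R) / volume R := by
  have hind : (fun y => ENNReal.ofReal |E.indicator (fun _ => (1 : ℝ)) y|) = E.indicator 1 := by
    funext y
    by_cases hy : y ∈ E <;> simp [hy]
  rw [avgAbs, hind, lintegral_indicator_one hE, Measure.restrict_apply hE]

lemma measurableSet_unitCube : MeasurableSet (unitCube n) :=
  MeasurableSet.univ_pi fun _ => measurableSet_Icc

lemma volume_unitCube : volume (unitCube n) = 1 := by
  rw [unitCube, volume_pi_pi]
  simp

lemma avgAbs_indicator_unitCube_le {a b x : Fin n → ℝ}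
    (hx : x ∈ univ.pi fun i => Ioo (a i) (b i)) :
    avgAbs (univ.pi fun i => Ioo (a i) (b i)) (indicator (unitCube n) fun _ => 1) ≤
      ENNReal.ofReal (∏ i, hullLength (x i))⁻¹ := by
  rw [avgAbs_indicator_one measurableSet_unitCube, unitCube,
    ← pi_inter_distrib, volume_pi_pi, volume_pi_pi, ← Finset.prod_inv_distrib,
    ENNReal.ofReal_prod_of_nonneg fun i _ => inv_nonneg.2 (hullLength_pos (x i)).le]
  refine ENNReal.div_le_of_le_mul ?_
  rw [← Finset.prod_mul_distrib]
  exact Finset.prod_le_prod' fun i _ => volume_Icc_inter_Ioo_le (hx i (mem_univ i))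

lemma strongMaximal_indicator_unitCube_le (x : Fin n → ℝ) :
    strongMaximal (indicator (unitCube n) fun _ => 1) x ≤
      ENNReal.ofReal (∏ i, hullLength (x i))⁻¹ := by
  refine iSup₂_le fun R ⟨a, b, _, hR⟩ => iSup_le fun hx => ?_
  subst hR
  exact avgAbs_indicator_unitCube_le hx

lemma ofReal_inv_prod_le_strongMaximal_indicator_unitCube (x : Fin n → ℝ) {δ : ℝ}
    (hδ : 0 < δ) :
    ENNReal.ofReal (∏ i, (hullLength (x i) + 2 * δ))⁻¹ ≤
      strongMaximal (indicator (unitCube n) fun _ => 1) x := by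
  set R : Set (Fin n → ℝ) := univ.pi fun i => Ioo (min (x i) 0 - δ) (max (x i) 1 + δ)
  have hside (i : Fin n) : max (x i) 1 + δ - (min (x i) 0 - δ) = hullLength (x i) + 2 * δ := by
    rw [hullLength]; ring
  have hR : IsRect R := ⟨_, _, fun i => by linarith [hside i, hullLength_pos (x i)], rfl⟩
  have hxR : x ∈ R := fun i _ =>
    ⟨by linarith [min_le_left (x i) 0], by linarith [le_max_left (x i) 1]⟩
  have hcube : unitCube n ∩ R = unitCube n := by
    refine inter_eq_left.2 fun y hy i _ => ?_
    obtain ⟨h0, h1⟩ := hy i (mem_univ i)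
    exact ⟨by linarith [min_le_right (x i) 0], by linarith [le_max_right (x i) 1]⟩
  have hvol : volume R = ENNReal.ofReal (∏ i, (hullLength (x i) + 2 * δ)) := by
    rw [volume_pi_pi, ENNReal.ofReal_prod_of_nonneg fun i _ => by
      linarith [hullLength_pos (x i)]]
    simp only [Real.volume_Ioo, hside]
  have hpos : 0 < ∏ i, (hullLength (x i) + 2 * δ) :=
    Finset.prod_pos fun i _ => by linarith [hullLength_pos (x i)]
  calc ENNReal.ofReal (∏ i, (hullLength (x i) + 2 * δ))⁻¹
      = avgAbs R (indicator (unitCube n) fun _ => 1) := by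
        rw [avgAbs_indicator_one measurableSet_unitCube, hcube,
          volume_unitCube, hvol, ENNReal.ofReal_inv_of_pos hpos, one_div]
    _ ≤ strongMaximal (indicator (unitCube n) fun _ => 1) x :=
        le_iSup₂_of_le R hR (le_iSup_of_le hxR le_rfl)

theorem strongMaximal_indicator_unitCube (x : Fin n → ℝ) :
    strongMaximal (indicator (unitCube n) fun _ => 1) x =
      ENNReal.ofReal (∏ i, hullLength (x i))⁻¹ := by
  have hne : ∏ i, (hullLength (x i) + 2 * 0) ≠ 0 := by
    simpa using Finset.prod_ne_zero_iff.2 fun i _ => (hullLength_pos (x i)).ne'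
  have hcont : ContinuousAt (fun δ : ℝ => ENNReal.ofReal (∏ i, (hullLength (x i) + 2 * δ))⁻¹) 0 :=
    ENNReal.continuous_ofReal.continuousAt.comp (ContinuousAt.inv₀ (by fun_prop) hne)
  have hlim : Tendsto (fun δ : ℝ => ENNReal.ofReal (∏ i, (hullLength (x i) + 2 * δ))⁻¹)
      (𝓝[>] 0) (𝓝 (ENNReal.ofReal (∏ i, hullLength (x i))⁻¹)) := by
    simpa using hcont.tendsto.mono_left nhdsWithin_le_nhds
  exact le_antisymm (strongMaximal_indicator_unitCube_le x) (le_of_tendsto hlim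
    (eventually_nhdsWithin_of_forall fun δ hδ =>
      ofReal_inv_prod_le_strongMaximal_indicator_unitCube x hδ))

lemma setOf_lt_strongMaximal_indicator_unitCube {t : ℝ} (ht : 0 < t) :
    {x | ENNReal.ofReal t < strongMaximal (indicator (unitCube n) fun _ => 1) x} =
      {x | ∏ i, hullLength (x i) < 1 / t} := by
  ext x
  have hpos : 0 < ∏ i, hullLength (x i) := Finset.prod_pos fun i _ => hullLength_pos (x i)
  rw [mem_ofPred_eq, mem_ofPred_eq, strongMaximal_indicator_unitCube,
    ENNReal.ofReal_lt_ofReal_iff (inv_pos.2 hpos), lt_inv_comm₀ ht hpos, one_div]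

end UnitCube

lemma intervalIntegrable_inv_hullLength (a b : ℝ) :
    IntervalIntegrable (fun x => (hullLength x)⁻¹) volume a b :=
  (continuous_hullLength.inv₀ fun x => (hullLength_pos x).ne').intervalIntegrable a b

lemma integral_inv_hullLength {s : ℝ} (hs : 1 ≤ s) :
    ∫ x in (1 - s)..s, (hullLength x)⁻¹ = 2 * log s + 1 := by
  have hleft : ∫ x in (1 - s)..0, (hullLength x)⁻¹ = log s := by
    rw [intervalIntegral.integral_congr (g := fun x => (1 - x)⁻¹) fun x hx => by
      rw [uIcc_of_le (by linarith)] at hx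
      rw [hullLength_of_nonpos hx.2],
      intervalIntegral.integral_comp_sub_left (fun x => x⁻¹), sub_zero, sub_sub_cancel,
      integral_inv_of_pos one_pos (by linarith), div_one]
  have hmid : ∫ x in (0 : ℝ)..1, (hullLength x)⁻¹ = 1 := by
    rw [intervalIntegral.integral_congr (g := fun _ => 1) fun x hx => by
      rw [uIcc_of_le zero_le_one] at hx
      simp [hullLength_of_mem_Icc hx]]
    simp
  have hright : ∫ x in (1 : ℝ)..s, (hullLength x)⁻¹ = log s := by
    rw [intervalIntegral.integral_congr (g := fun x => x⁻¹) fun x hx => by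
      rw [uIcc_of_le hs] at hx
      rw [hullLength_of_one_le hx.1],
      integral_inv_of_pos one_pos (by linarith), div_one]
  rw [← intervalIntegral.integral_add_adjacent_intervals (b := 0)
      (intervalIntegrable_inv_hullLength _ _) (intervalIntegrable_inv_hullLength _ _),
    ← intervalIntegral.integral_add_adjacent_intervals (a := 0) (b := 1)
      (intervalIntegrable_inv_hullLength _ _) (intervalIntegrable_inv_hullLength _ _),
    hleft, hmid, hright]
  ring

lemma setOf_hullLength_mul_lt {s : ℝ} (hs : 1 < s) :
    {p : ℝ × ℝ | hullLength p.1 * hullLength p.2 < s} =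
      regionBetween (fun x => 1 - s / hullLength x) (fun x => s / hullLength x)
        (Ioo (1 - s) s) := by
  ext p
  rw [mem_ofPred_eq, regionBetween, mem_ofPred_eq, mul_comm, ← lt_div_iff₀ (hullLength_pos _),
    hullLength_lt_iff, one_lt_div (hullLength_pos _), hullLength_lt_iff]
  exact ⟨fun ⟨h1, h2⟩ => ⟨h1.2, h2⟩, fun ⟨h1, h2⟩ => ⟨⟨hs, h1⟩, h2⟩⟩

lemma volume_setOf_hullLength_mul_lt {s : ℝ} (hs : 1 < s) :
    volume {p : ℝ × ℝ | hullLength p.1 * hullLength p.2 < s} =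
      ENNReal.ofReal (4 * s * log s + 1) := by
  have hcont : Continuous fun x => s / hullLength x :=
    continuous_const.div continuous_hullLength fun x => (hullLength_pos x).ne'
  rw [setOf_hullLength_mul_lt hs, Measure.volume_eq_prod,
    volume_regionBetween_eq_integral (f := fun x => 1 - s / hullLength x)
      ((continuous_const.sub hcont).integrableOn_Icc.mono_set Ioo_subset_Icc_self)
      (hcont.integrableOn_Icc.mono_set Ioo_subset_Icc_self) measurableSet_Ioo fun x hx => ?_]
  · rw [← integral_Ioc_eq_integral_Ioo, ← intervalIntegral.integral_of_le (by linarith)]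
    have hintegrand (x : ℝ) : s / hullLength x - (1 - s / hullLength x) =
        2 * s * (hullLength x)⁻¹ - 1 := by ring
    simp only [Pi.sub_apply, hintegrand]
    rw [intervalIntegral.integral_sub ((intervalIntegrable_inv_hullLength _ _).const_mul _)
      intervalIntegrable_const, intervalIntegral.integral_const_mul, integral_inv_hullLength hs.le,
      intervalIntegral.integral_const, smul_eq_mul]
    ring_nf
  · have h1 : 1 < s / hullLength x :=
      (one_lt_div (hullLength_pos x)).2 (hullLength_lt_iff.2 ⟨hs, hx⟩)
    linarith

lemma volume_setOf_prod_hullLength_lt {s : ℝ} (hs : 1 < s) :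
    volume {x : Fin 2 → ℝ | ∏ i, hullLength (x i) < s} = ENNReal.ofReal (4 * s * log s + 1) := by
  have hopen : IsOpen {p : ℝ × ℝ | hullLength p.1 * hullLength p.2 < s} :=
    isOpen_lt (by fun_prop) continuous_const
  have hpre : {x : Fin 2 → ℝ | ∏ i, hullLength (x i) < s} =
      MeasurableEquiv.finTwoArrow ⁻¹' {p : ℝ × ℝ | hullLength p.1 * hullLength p.2 < s} := by
    ext x
    simp [Fin.prod_univ_two]
  rw [hpre, (volume_preserving_finTwoArrow ℝ).measure_preimage
    hopen.measurableSet.nullMeasurableSet, volume_setOf_hullLength_mul_lt hs]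

lemma one_lt_mul_log {s : ℝ} (hs : 2 < s) : 1 < s * log s := by
  have hlog : log 2 < log s := log_lt_log two_pos hs
  nlinarith [log_two_gt_d9]

/-- In `ℝ²` the distribution function of the strong maximal function of the unit
square satisfies `|{M_𝓡(χ_{[0,1]²}) > t}| ≈ (1/t) log(1/t)` for `0 < t < 1/2`. -/
theorem strongMaximal_unitSquare_distribution :
    ∃ c C : ℝ, 0 < c ∧ 0 < C ∧ ∀ t : ℝ, 0 < t → t < 1 / 2 →
      ENNReal.ofReal (c * (1 / t) * Real.log (1 / t)) ≤
        volume {x | ENNReal.ofReal t <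
          strongMaximal (Set.indicator unitSquare fun _ => (1:ℝ)) x} ∧
      volume {x | ENNReal.ofReal t <
          strongMaximal (Set.indicator unitSquare fun _ => (1:ℝ)) x} ≤
        ENNReal.ofReal (C * (1 / t) * Real.log (1 / t)) := by
  refine ⟨4, 5, by norm_num, by norm_num, fun t ht ht2 => ?_⟩
  have hs : 2 < 1 / t := by rw [lt_div_iff₀ ht]; linarith
  have hvol : volume {x | ENNReal.ofReal t <
      strongMaximal (Set.indicator unitSquare fun _ => (1:ℝ)) x} =
        ENNReal.ofReal (4 * (1 / t) * log (1 / t) + 1) :=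
    (congrArg volume (setOf_lt_strongMaximal_indicator_unitCube ht)).trans
      (volume_setOf_prod_hullLength_lt (by linarith))
  have hslog := one_lt_mul_log hs
  rw [hvol]
  constructor <;> apply ENNReal.ofReal_le_ofReal <;> linarith
end
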